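/- arXiv:2103.01866 — 5 statements merged into one kernel-verified Lean document; each statement's English description precedes it below -/
import Mathlib

section
/- Let U be an (n+1)×(n+1) complex matrix that is tridiagonal except for possibly nonzero corner entries u_{1,n+1} and u_{n+1,1}. Then det(U) = det(T) - u_{1,n+1}·u_{n+1,1}·det(T') + (-1)^n·u_{n+1,1}·u_{1,2}·u_{2,3}···u_{n,n+1} + (-1)^n·u_{1,n+1}·u_{2,1}·u_{3,2}···u_{n+1,n}, where T is the tridiagonal matrix obtained from U by setting the corner entries to zero, and T' is the tridiagonal submatrix of U obtained by deleting the first and last rows and columns. -/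
/-!
Write the first and last rows of `U` as the corresponding rows of `T` plus `u₁,ₙ₊₁ • eₙ₊₁`
and `uₙ₊₁,₁ • e₁`. Multilinearity of the determinant in these two rows gives `det T` plus three
determinants in which one or both rows are standard basis vectors. Laplace expansion along such
a row leaves a triangular matrix whose diagonal is the sub- or superdiagonal of `T` (with sign
`(-1)ⁿ`); expanding along both rows leaves `-det T'`.
-/

open Matrix

namespace Matrix

variable {R : Type*} [CommRing R]

theorem det_updateRow_single_one {n : ℕ} (A : Matrix (Fin (n + 1)) (Fin (n + 1)) R)
    (i j : Fin (n + 1)) :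
    (A.updateRow i (Pi.single j 1)).det =
      (-1) ^ (i + j : ℕ) * (A.submatrix i.succAbove j.succAbove).det := by
  rw [← adjugate_apply, adjugate_fin_succ_eq_det_submatrix]

section

variable {ι : Type*} [Fintype ι] [DecidableEq ι]

theorem det_updateRow_add_smul (M : Matrix ι ι R) (i : ι) (a : R) (v : ι → R) :
    (M.updateRow i (M i + a • v)).det = M.det + a * (M.updateRow i v).det := by
  rw [det_updateRow_add, det_updateRow_smul, updateRow_eq_self]

theorem det_updateRow_add_smul_updateRow_add_smul (M : Matrix ι ι R) {i i' : ι} (h : i ≠ i')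
    (a b : R) (v v' : ι → R) :
    ((M.updateRow i (M i + a • v)).updateRow i' (M i' + b • v')).det =
      M.det + a * (M.updateRow i v).det + b * (M.updateRow i' v').det
        + a * b * ((M.updateRow i v).updateRow i' v').det := by
  have hrow : ∀ {k k' : ι} (hk : k ≠ k') (w : ι → R), M k' = (M.updateRow k w) k' :=
    fun hk _ => (updateRow_ne hk.symm).symm
  rw [hrow h (M i + a • v), det_updateRow_add_smul, det_updateRow_add_smul, updateRow_comm _ h,
    hrow h.symm v', det_updateRow_add_smul, updateRow_comm _ h.symm]
  ring

end

theorem det_updateRow_zero_single_last {n : ℕ} (M : Matrix (Fin (n + 1)) (Fin (n + 1)) R)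
    (hM : ∀ i j : Fin (n + 1), (j : ℕ) + 2 ≤ i → M i j = 0) :
    (M.updateRow 0 (Pi.single (Fin.last n) 1)).det =
      (-1) ^ n * ∏ j : Fin n, M j.succ j.castSucc := by
  have hupper : (M.submatrix Fin.succ Fin.castSucc).IsUpperTriangular := fun i j hji =>
    hM _ _ (by simp only [Fin.val_succ, Fin.val_castSucc]; exact Nat.add_le_add_right hji 1)
  rw [det_updateRow_single_one, Fin.succAbove_zero, Fin.succAbove_last,
    det_of_isUpperTriangular hupper]
  simp

theorem det_updateRow_last_single_zero {n : ℕ} (M : Matrix (Fin (n + 1)) (Fin (n + 1)) R)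
    (hM : ∀ i j : Fin (n + 1), (i : ℕ) + 2 ≤ j → M i j = 0) :
    (M.updateRow (Fin.last n) (Pi.single 0 1)).det =
      (-1) ^ n * ∏ j : Fin n, M j.castSucc j.succ := by
  have hlower : (M.submatrix Fin.castSucc Fin.succ).IsLowerTriangular := fun i j hij =>
    hM _ _ (by simp only [Fin.val_succ, Fin.val_castSucc]; exact Nat.add_le_add_right hij 1)
  rw [det_updateRow_single_one, Fin.succAbove_zero, Fin.succAbove_last,
    det_of_isLowerTriangular _ hlower]
  simp

theorem det_updateRow_zero_single_last_updateRow_last_single_zero {n : ℕ}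
    (M : Matrix (Fin (n + 2)) (Fin (n + 2)) R) :
    ((M.updateRow 0 (Pi.single (Fin.last (n + 1)) 1)).updateRow (Fin.last (n + 1))
        (Pi.single 0 1)).det =
      -(M.submatrix (fun i : Fin n => i.succ.castSucc) (fun j => j.succ.castSucc)).det := by
  have hsub : (M.updateRow 0 (Pi.single (Fin.last (n + 1)) 1)).submatrix Fin.castSucc Fin.succ
      = (M.submatrix Fin.castSucc Fin.succ).updateRow 0 (Pi.single (Fin.last n) 1) := by
    ext i j
    cases i using Fin.cases <;>
      simp [updateRow_apply, Pi.single_apply, Fin.succ_inj, ← Fin.succ_last]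
  rw [det_updateRow_single_one, Fin.succAbove_zero, Fin.succAbove_last, hsub,
    det_updateRow_single_one, Fin.succAbove_zero, Fin.succAbove_last]
  have hsign : (-1 : R) ^ (n + 1 + n) = -1 := by
    rw [add_right_comm, ← two_mul, pow_succ, pow_mul, neg_one_sq, one_pow, one_mul]
  simp only [Fin.val_last, Fin.val_zero, add_zero, zero_add, ← mul_assoc, ← pow_add, hsign,
    submatrix_submatrix, neg_one_mul]
  rfl

section eraseCorners

variable {α : Type*} {n : ℕ}

def eraseCorners [Zero α] (M : Matrix (Fin (n + 1)) (Fin (n + 1)) α) :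
    Matrix (Fin (n + 1)) (Fin (n + 1)) α :=
  of fun i j => if (i = 0 ∧ j = Fin.last n) ∨ (i = Fin.last n ∧ j = 0) then 0 else M i j

theorem eraseCorners_apply_of_not_corner [Zero α] (M : Matrix (Fin (n + 1)) (Fin (n + 1)) α)
    {i j : Fin (n + 1)} (h : ¬(((i : ℕ) = 0 ∧ (j : ℕ) = n) ∨ ((i : ℕ) = n ∧ (j : ℕ) = 0))) :
    eraseCorners M i j = M i j := by
  simp only [eraseCorners, of_apply, Fin.ext_iff, Fin.val_zero, Fin.val_last]
  exact if_neg h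

theorem eraseCorners_apply_eq_zero_of_band [Zero α] {M : Matrix (Fin (n + 1)) (Fin (n + 1)) α}
    (hM : ∀ i j : Fin (n + 1), ((i : ℕ) + 2 ≤ j ∨ (j : ℕ) + 2 ≤ i) →
      ¬((i = 0 ∧ j = Fin.last n) ∨ (i = Fin.last n ∧ j = 0)) → M i j = 0)
    {i j : Fin (n + 1)} (hij : (i : ℕ) + 2 ≤ j ∨ (j : ℕ) + 2 ≤ i) :
    eraseCorners M i j = 0 := by
  by_cases hc : (i = 0 ∧ j = Fin.last n) ∨ (i = Fin.last n ∧ j = 0)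
  · simp [eraseCorners, hc]
  · simp [eraseCorners, hc, hM i j hij hc]

theorem eq_updateRow_eraseCorners [Semiring α] (M : Matrix (Fin (n + 1)) (Fin (n + 1)) α) :
    M = ((eraseCorners M).updateRow 0
        (eraseCorners M 0 + M 0 (Fin.last n) • Pi.single (Fin.last n) 1)).updateRow (Fin.last n)
      (eraseCorners M (Fin.last n) + M (Fin.last n) 0 • Pi.single 0 1) := by
  ext i j
  simp only [updateRow_apply, eraseCorners, of_apply, Pi.add_apply, Pi.smul_apply,
    Pi.single_apply]
  split_ifs <;> subst_vars <;> simp_all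

end eraseCorners

end Matrix

/-- Lemma 1.2: determinant of an "almost tridiagonal" matrix (tridiagonal except for
the two corner entries `u 0 (Fin.last n)` and `u (Fin.last n) 0`). -/
theorem stmt_0 (n : ℕ) (hn : 2 ≤ n) (u : Matrix (Fin (n + 1)) (Fin (n + 1)) ℂ)
    (htri : ∀ i j : Fin (n + 1), ((i : ℕ) + 2 ≤ (j : ℕ) ∨ (j : ℕ) + 2 ≤ (i : ℕ)) →
      ¬((i = 0 ∧ j = Fin.last n) ∨ (i = Fin.last n ∧ j = 0)) → u i j = 0) :
    u.det =
      (Matrix.of fun i j : Fin (n + 1) =>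
          if (i = 0 ∧ j = Fin.last n) ∨ (i = Fin.last n ∧ j = 0) then 0 else u i j).det
        - u 0 (Fin.last n) * u (Fin.last n) 0 *
          (Matrix.of fun i j : Fin (n - 1) =>
            u ⟨(i : ℕ) + 1, by have := i.2; omega⟩ ⟨(j : ℕ) + 1, by have := j.2; omega⟩).det
        + (-1) ^ n * u (Fin.last n) 0 * ∏ j : Fin n, u j.castSucc j.succ
        + (-1) ^ n * u 0 (Fin.last n) * ∏ j : Fin n, u j.succ j.castSucc := by
  obtain ⟨m, rfl⟩ : ∃ m, n = m + 1 := ⟨n - 1, by omega⟩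
  change u.det = (eraseCorners u).det - _ + _ + _
  have hkeep {i j : Fin (m + 2)}
      (h : ¬(((i : ℕ) = 0 ∧ (j : ℕ) = m + 1) ∨ ((i : ℕ) = m + 1 ∧ (j : ℕ) = 0))) :
      eraseCorners u i j = u i j := eraseCorners_apply_of_not_corner u h
  have hsub : ∏ j : Fin (m + 1), eraseCorners u j.succ j.castSucc =
      ∏ j : Fin (m + 1), u j.succ j.castSucc :=
    Finset.prod_congr rfl fun j _ => hkeep (by simp only [Fin.val_succ, Fin.val_castSucc]; omega)
  have hsuper : ∏ j : Fin (m + 1), eraseCorners u j.castSucc j.succ =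
      ∏ j : Fin (m + 1), u j.castSucc j.succ :=
    Finset.prod_congr rfl fun j _ => hkeep (by simp only [Fin.val_succ, Fin.val_castSucc]; omega)
  have hinner : ((eraseCorners u).submatrix (fun i : Fin m => i.succ.castSucc)
      (fun j => j.succ.castSucc)).det =
      (Matrix.of fun i j : Fin (m + 1 - 1) =>
        u ⟨(i : ℕ) + 1, by have := i.2; omega⟩ ⟨(j : ℕ) + 1, by have := j.2; omega⟩).det :=
    congrArg det (ext fun i j => hkeep (by simp only [Fin.val_succ, Fin.val_castSucc]; omega))
  conv_lhs => rw [eq_updateRow_eraseCorners u]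
  rw [det_updateRow_add_smul_updateRow_add_smul _ Fin.last_pos.ne,
    det_updateRow_zero_single_last _ fun _ _ h => eraseCorners_apply_eq_zero_of_band htri (.inr h),
    det_updateRow_last_single_zero _ fun _ _ h => eraseCorners_apply_eq_zero_of_band htri (.inl h),
    det_updateRow_zero_single_last_updateRow_last_single_zero, hsub, hsuper, hinner]
  ring
end

section
/- Let n ≥ 2 and r_0, r_1, ..., r_n be complex numbers with n+1 even and r_j = r_{n-j+1} for j = 1, ..., (n-1)/2. Let M± be the (n+1)×(n+1) symmetric tridiagonal matrix with diagonal entries t ± r_0, t, t, ..., t, t ± r_0 and off-diagonal entries r_1, r_2, ..., r_n. Then det(M±) equals the product of the determinants of the two ((n+1)/2)×((n+1)/2) symmetric tridiagonal matrices with diagonal (t ± r_0, t, ..., t, t + r_{(n+1)/2}) and (t ± r_0, t, ..., t, t − r_{(n+1)/2}) respectively, both with off-diagonal entries r_1, ..., r_{(n-1)/2}. -/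
open Matrix

/-- The `k × k` tridiagonal matrix with diagonal `d`, superdiagonal `sup`
(entry `sup i` at position `(i, i+1)`) and subdiagonal `sub`
(entry `sub j` at position `(j+1, j)`). -/
def tri (k : ℕ) (d sup sub : ℕ → ℂ) : Matrix (Fin k) (Fin k) ℂ :=
  Matrix.of fun i j =>
    if (i : ℕ) = (j : ℕ) then d i
    else if (i : ℕ) + 1 = (j : ℕ) then sup i
    else if (j : ℕ) + 1 = (i : ℕ) then sub j
    else 0

/-!
Fold the index set `{0, …, 2m+1}` in half, pairing `i` with `2m+1-i`. Because the diagonal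
and the off-diagonal entries are palindromic, the reordered matrix is the block matrix
`[[A, E], [E, A]]`, where `A` is the upper-left `(m+1) × (m+1)` corner and the only coupling
`E` between the halves is the entry `r (m+1)` linking the two middle indices `m` and `m+1`.
Block elimination gives `det [[A, E], [E, A]] = det (A + E) * det (A - E)`, and `A ± E` are
the two half-size matrices, with `t ± r (m+1)` in the last diagonal entry.
-/

theorem Matrix.det_fromBlocks_self_swap {n R : Type*} [Fintype n] [DecidableEq n] [CommRing R]
    (A B : Matrix n n R) : (fromBlocks A B B A).det = (A + B).det * (A - B).det := by
  have hconj : fromBlocks 1 0 1 1 * fromBlocks A B B A * fromBlocks 1 0 (-1) 1 =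
      fromBlocks (A - B) B 0 (A + B) := by
    simp only [fromBlocks_multiply, fromBlocks_inj]
    refine ⟨?_, ?_, ?_, ?_⟩ <;>
      simp only [one_mul, zero_mul, mul_one, mul_zero, add_zero, zero_add, mul_neg] <;> abel
  have hdet := congrArg det hconj
  rw [det_mul, det_mul, det_fromBlocks_zero₁₂, det_fromBlocks_zero₁₂,
    det_fromBlocks_zero₂₁] at hdet
  simpa [mul_comm] using hdet

def finFold (m : ℕ) : Fin (m + 1) ⊕ Fin (m + 1) ≃ Fin (2 * m + 2) :=
  (Equiv.sumCongr (Equiv.refl _) Fin.revPerm).trans (finSumFinEquiv.trans (finCongr (by omega)))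

-- Not proved by `rfl`, so that `simp` also rewrites the `Decidable` instances inside `tri`.
@[simp]
lemma finFold_inl_val (m : ℕ) (i : Fin (m + 1)) : (finFold m (.inl i) : ℕ) = i := by
  simp [finFold]

@[simp]
lemma finFold_inr_val (m : ℕ) (i : Fin (m + 1)) : (finFold m (.inr i) : ℕ) = 2 * m + 1 - i := by
  simp only [finFold, Equiv.trans_apply, Equiv.sumCongr_apply, Sum.map_inr, Fin.revPerm_apply,
    finSumFinEquiv_apply_right, finCongr_apply, Fin.val_cast, Fin.val_natAdd, Fin.val_rev]
  omega

lemma tri_submatrix_finFold {m : ℕ} {D d s : ℕ → ℂ} (hlo : ∀ i ≤ m, D i = d i)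
    (hhi : ∀ i ≤ m, D (2 * m + 1 - i) = d i) (hs : ∀ i < m, s (2 * m - i) = s i) :
    (tri (2 * m + 2) D s s).submatrix (finFold m) (finFold m) =
      fromBlocks (tri (m + 1) d s s) (single (Fin.last m) (Fin.last m) (s m))
        (single (Fin.last m) (Fin.last m) (s m)) (tri (m + 1) d s s) := by
  ext (⟨i, hi⟩ | ⟨i, hi⟩) (⟨j, hj⟩ | ⟨j, hj⟩) <;>
    simp only [submatrix_apply, fromBlocks_apply₁₁, fromBlocks_apply₁₂, fromBlocks_apply₂₁,
      fromBlocks_apply₂₂, finFold_inl_val, finFold_inr_val, tri, of_apply, single_apply,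
      Fin.ext_iff, Fin.val_last] <;>
    split_ifs <;> first
      | omega
      | rfl
      | exact hlo i (by omega)
      | exact hhi i (by omega)
      | (congr 1; omega)
      | (rw [← hs i (by omega)]; congr 1; omega)
      | (rw [← hs j (by omega)]; congr 1; omega)

lemma tri_add_single_self {k : ℕ} (d sup sub : ℕ → ℂ) (i : Fin k) (c : ℂ) :
    tri k d sup sub + single i i c = tri k (Function.update d i (d i + c)) sup sub := by
  ext a b
  simp only [tri, Matrix.add_apply, of_apply, single_apply, Function.update_apply, Fin.ext_iff]
  split_ifs <;> first | omega | rw [add_zero] | congr 2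

theorem stmt_2_general (m : ℕ) (hm : 1 ≤ m) (t : ℂ) (r : ℕ → ℂ) (ε : ℂ)
    (hpal : ∀ j, 1 ≤ j → j ≤ m → r j = r (2 * m + 2 - j)) :
    (tri (2 * m + 2) (fun i => if i = 0 ∨ i = 2 * m + 1 then t + ε * r 0 else t)
        (fun i => r (i + 1)) (fun i => r (i + 1))).det =
      (tri (m + 1)
          (fun i => if i = 0 then t + ε * r 0 else if i = m then t + r (m + 1) else t)
          (fun i => r (i + 1)) (fun i => r (i + 1))).det *
      (tri (m + 1)
          (fun i => if i = 0 then t + ε * r 0 else if i = m then t - r (m + 1) else t)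
          (fun i => r (i + 1)) (fun i => r (i + 1))).det := by
  set d : ℕ → ℂ := fun i => if i = 0 then t + ε * r 0 else t
  have hfold := tri_submatrix_finFold (m := m) (d := d)
    (D := fun i => if i = 0 ∨ i = 2 * m + 1 then t + ε * r 0 else t) (s := fun i => r (i + 1))
    (fun i hi => by simp only [d]; split_ifs <;> first | rfl | omega)
    (fun i hi => by simp only [d]; split_ifs <;> first | rfl | omega)
    (fun i hi => by rw [hpal (i + 1) (by omega) (by omega)]; congr 1; omega)
  have hcorner (c : ℂ) : Function.update d m (d m + c) =
      fun i => if i = 0 then t + ε * r 0 else if i = m then t + c else t := by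
    funext i
    rcases eq_or_ne i m with rfl | hi
    · simp [d, show i ≠ 0 by omega]
    · simp [d, hi]
  rw [← det_submatrix_equiv_self (finFold m), hfold, det_fromBlocks_self_swap, sub_eq_add_neg,
    single_neg, tri_add_single_self, tri_add_single_self, Fin.val_last, hcorner, hcorner,
    ← sub_eq_add_neg]

/-- Lemma 2.2 (case `n + 1` even, `n = 2m + 1`): factorization of the determinant of the
symmetric tridiagonal matrix with corner diagonal entries `t ± r 0` and palindromic
off-diagonal entries. -/
theorem stmt_2 (m : ℕ) (hm : 1 ≤ m) (t : ℂ) (r : ℕ → ℂ) (ε : ℂ) (hε : ε = 1 ∨ ε = -1)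
    (hpal : ∀ j, 1 ≤ j → j ≤ m → r j = r (2 * m + 2 - j)) :
    (tri (2 * m + 2) (fun i => if i = 0 ∨ i = 2 * m + 1 then t + ε * r 0 else t)
        (fun i => r (i + 1)) (fun i => r (i + 1))).det =
      (tri (m + 1)
          (fun i => if i = 0 then t + ε * r 0 else if i = m then t + r (m + 1) else t)
          (fun i => r (i + 1)) (fun i => r (i + 1))).det *
      (tri (m + 1)
          (fun i => if i = 0 then t + ε * r 0 else if i = m then t - r (m + 1) else t)
          (fun i => r (i + 1)) (fun i => r (i + 1))).det :=
  stmt_2_general m hm t r ε hpal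
end

section
/- Let n ≥ 2 with n+1 odd and let r_0, r_1, ..., r_n be complex numbers with r_j = r_{n-j+1} for j = 1, ..., n/2. Let M± be the (n+1)×(n+1) symmetric tridiagonal matrix with diagonal entries t ± r_0, t, ..., t, t ± r_0 and off-diagonal entries r_1, ..., r_n. Then det(M±) equals det(P±)·det(Q±), where P± is the (n/2)×(n/2) symmetric tridiagonal matrix with diagonal (t ± r_0, t, ..., t) and off-diagonals r_1, ..., r_{n/2 − 1}, and Q± is the (n/2 + 1)×(n/2 + 1) tridiagonal matrix with diagonal (t ± r_0, t, ..., t), superdiagonal (r_1, ..., r_{n/2−1}, r_{n/2}) and subdiagonal (r_1, ..., r_{n/2−1}, 2·r_{n/2}). -/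
open Matrix

namespace Stmt3Aux

/-- indicator vector -/
def ind {K : ℕ} (a : ℕ) : Fin K → ℂ := fun i => if (i : ℕ) = a then 1 else 0

/-- evaluation with out-of-range default 0 -/
def ev {K : ℕ} (f : Fin K → ℂ) (a : ℕ) : ℂ := if h : a < K then f ⟨a, h⟩ else 0

lemma ev_lt {K : ℕ} (f : Fin K → ℂ) {a : ℕ} (h : a < K) : ev f a = f ⟨a, h⟩ := dif_pos h

lemma ind_of_le {K : ℕ} {a : ℕ} (h : K ≤ a) (i : Fin K) : ind a i = (0 : ℂ) := by
  have := i.isLt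
  simp only [ind]
  rw [if_neg]
  omega

lemma sum_mul_ind {K : ℕ} (f : Fin K → ℂ) (a : ℕ) :
    ∑ i, f i * ind a i = ev f a := by
  by_cases h : a < K
  · rw [ev_lt f h, Finset.sum_eq_single (⟨a, h⟩ : Fin K)]
    · simp [ind]
    · intro b _ hb
      have : (b : ℕ) ≠ a := fun hba => hb (by ext; simpa using hba)
      simp [ind, this]
    · simp
  · rw [ev, dif_neg h]
    apply Finset.sum_eq_zero
    intro b _
    rw [ind_of_le (by omega), mul_zero]

lemma tri_col {K : ℕ} (d sup sub : ℕ → ℂ) (i j : Fin K) :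
    tri K d sup sub i j =
      d (j : ℕ) * ind (j : ℕ) i +
        (if 1 ≤ (j : ℕ) then sup ((j : ℕ) - 1) else 0) * ind ((j : ℕ) - 1) i +
        sub (j : ℕ) * ind ((j : ℕ) + 1) i := by
  simp only [tri, Matrix.of_apply, ind]
  by_cases h1 : (i : ℕ) = (j : ℕ)
  · rw [if_pos h1, h1]
    split_ifs <;> first | (exfalso; omega) | ring1
  · rw [if_neg h1]
    by_cases h2 : (i : ℕ) + 1 = (j : ℕ)
    · rw [if_pos h2, ← h2, Nat.add_sub_cancel]
      split_ifs <;> first | (exfalso; omega) | ring1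
    · rw [if_neg h2]
      split_ifs <;> first | (exfalso; omega) | ring1


lemma sum_mul_const_ind {K : ℕ} (g : Fin K → ℂ) (c : ℂ) (a : ℕ) :
    ∑ i, g i * (c * ind a i) = c * ev g a := by
  rw [show ∑ i, g i * (c * ind a i) = ∑ i, c * (g i * ind a i) from
    Finset.sum_congr rfl (fun i _ => by ring), ← Finset.mul_sum, sum_mul_ind]

lemma sum_mul_tri_col {K : ℕ} (d sup sub : ℕ → ℂ) (g : Fin K → ℂ) (j : Fin K) :
    ∑ k, g k * tri K d sup sub k j =
      d (j : ℕ) * ev g (j : ℕ) +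
        (if 1 ≤ (j : ℕ) then sup ((j : ℕ) - 1) else 0) * ev g ((j : ℕ) - 1) +
        sub (j : ℕ) * ev g ((j : ℕ) + 1) := by
  simp only [tri_col, mul_add]
  rw [Finset.sum_add_distrib, Finset.sum_add_distrib, sum_mul_const_ind,
    sum_mul_const_ind, sum_mul_const_ind]

lemma sum_mul_sub_ind {K : ℕ} (f : Fin K → ℂ) (a b : ℕ) :
    ∑ i, f i * (ind a i - ind b i) = ev f a - ev f b := by
  simp only [mul_sub]
  rw [Finset.sum_sub_distrib, sum_mul_ind, sum_mul_ind]

lemma sum_mul_add_ind {K : ℕ} (f : Fin K → ℂ) (a b : ℕ) :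
    ∑ i, f i * (ind a i + ind b i) = ev f a + ev f b := by
  simp only [mul_add]
  rw [Finset.sum_add_distrib, sum_mul_ind, sum_mul_ind]

lemma sum_ind_mul_ind {K : ℕ} {a : ℕ} (b : ℕ) (ha : a < K) :
    ∑ i : Fin K, ind a i * ind b i = if a = b then 1 else 0 := by
  rw [show ∑ i : Fin K, ind a i * ind b i = ∑ i : Fin K, ind b i * ind a i from
    Finset.sum_congr rfl (fun i _ => by ring), sum_mul_ind, ev_lt _ ha]
  simp [ind]

lemma tri_transpose {K : ℕ} (d sup sub : ℕ → ℂ) :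
    (tri K d sup sub)ᵀ = tri K d sub sup := by
  ext i j
  simp only [Matrix.transpose_apply, tri, Matrix.of_apply]
  split_ifs <;> first | (exfalso; omega) | rfl | (congr 1 <;> omega)


lemma ev_ge {K : ℕ} (f : Fin K → ℂ) {a : ℕ} (h : K ≤ a) : ev f a = 0 :=
  dif_neg (by omega)

lemma ev_tri {K : ℕ} (d sup sub : ℕ → ℂ) (i : Fin K) {a : ℕ} (h : a < K) :
    ev (fun w => tri K d sup sub i w) a =
      d a * ind a i + (if 1 ≤ a then sup (a - 1) else 0) * ind (a - 1) i +
        sub a * ind (a + 1) i := by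
  rw [ev_lt _ h]
  exact tri_col d sup sub i ⟨a, h⟩

lemma ev_gS {m : ℕ} (i : Fin (2*m+1)) {a : ℕ} (h : a < m) :
    ev (fun k : Fin m => ind (k : ℕ) i - ind (2*m - (k : ℕ)) i) a
      = ind a i - ind (2*m - a) i := by
  rw [ev_lt _ h]

lemma ev_gT {m : ℕ} (i : Fin (2*m+1)) {a : ℕ} (h : a < m+1) :
    ev (fun j : Fin (m+1) => ind (j : ℕ) i + ind (2*m - (j : ℕ)) i) a
      = ind a i + ind (2*m - a) i := by
  rw [ev_lt _ h]

lemma sum_scaled {K : ℕ} (α γ : ℂ) {a : ℕ} (c : ℕ) (ha : a < K) :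
    ∑ i : Fin K, (α * ind a i) * (γ * ind c i) = α * γ * (if a = c then 1 else 0) := by
  rw [show (∑ i : Fin K, (α * ind a i) * (γ * ind c i))
      = α * γ * ∑ i : Fin K, ind a i * ind c i from by
    rw [Finset.mul_sum]; exact Finset.sum_congr rfl (fun i _ => by ring),
    sum_ind_mul_ind _ ha]

lemma sum_comb {K : ℕ} (α β γ δ : ℂ) {a b : ℕ} (c d : ℕ) (ha : a < K) (hb : b < K) :
    ∑ i : Fin K, (α * ind a i + β * ind b i) * (γ * ind c i + δ * ind d i)
      = α * γ * (if a = c then 1 else 0) + α * δ * (if a = d then 1 else 0)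
        + β * γ * (if b = c then 1 else 0) + β * δ * (if b = d then 1 else 0) := by
  simp only [add_mul, mul_add]
  rw [Finset.sum_add_distrib, Finset.sum_add_distrib, Finset.sum_add_distrib,
    sum_scaled _ _ _ ha, sum_scaled _ _ _ ha, sum_scaled _ _ _ hb, sum_scaled _ _ _ hb]
  ring

/-- change of basis matrix: antisymmetric then symmetric vectors -/
noncomputable def Sb (m : ℕ) : Matrix (Fin (2*m+1)) (Fin m ⊕ Fin (m+1)) ℂ :=
  fun i x => Sum.elim (fun k : Fin m => ind (k : ℕ) i - ind (2*m - (k : ℕ)) i)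
    (fun j : Fin (m+1) => ind (j : ℕ) i + ind (2*m - (j : ℕ)) i) x

/-- left inverse of `Sb` -/
noncomputable def Tb (m : ℕ) : Matrix (Fin m ⊕ Fin (m+1)) (Fin (2*m+1)) ℂ :=
  fun x i => Sum.elim (fun k : Fin m => (ind (k : ℕ) i - ind (2*m - (k : ℕ)) i) / 2)
    (fun j : Fin (m+1) =>
      (if (j : ℕ) = m then (1:ℂ)/2 else 1) * ((ind (j : ℕ) i + ind (2*m - (j : ℕ)) i) / 2)) x

lemma TS (m : ℕ) (hm : 1 ≤ m) : Tb m * Sb m = 1 := by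
  ext x y
  rw [Matrix.mul_apply]
  cases x with
  | inl k =>
    have hk := k.isLt
    cases y with
    | inl k' =>
      have hk' := k'.isLt
      simp only [Tb, Sb, Sum.elim_inl]
      rw [show (∑ i, (ind (k : ℕ) i - ind (2*m - (k : ℕ)) i) / 2 *
            (ind (k' : ℕ) i - ind (2*m - (k' : ℕ)) i))
          = ∑ i : Fin (2*m+1), ((1/2 : ℂ) * ind (k : ℕ) i + (-(1/2)) * ind (2*m - (k : ℕ)) i) *
            ((1 : ℂ) * ind (k' : ℕ) i + (-1 : ℂ) * ind (2*m - (k' : ℕ)) i) from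
          Finset.sum_congr rfl (fun i _ => by ring),
        sum_comb _ _ _ _ _ _ (by omega) (by omega), Matrix.one_apply]
      simp only [Sum.inl.injEq, Fin.ext_iff]
      split_ifs <;> first | (exfalso; omega) | norm_num
    | inr j =>
      have hj := j.isLt
      simp only [Tb, Sb, Sum.elim_inl, Sum.elim_inr]
      rw [show (∑ i, (ind (k : ℕ) i - ind (2*m - (k : ℕ)) i) / 2 *
            (ind (j : ℕ) i + ind (2*m - (j : ℕ)) i))
          = ∑ i : Fin (2*m+1), ((1/2 : ℂ) * ind (k : ℕ) i + (-(1/2)) * ind (2*m - (k : ℕ)) i) *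
            ((1 : ℂ) * ind (j : ℕ) i + (1 : ℂ) * ind (2*m - (j : ℕ)) i) from
          Finset.sum_congr rfl (fun i _ => by ring),
        sum_comb _ _ _ _ _ _ (by omega) (by omega), Matrix.one_apply]
      simp only [reduceCtorEq, if_false]
      split_ifs <;> first | (exfalso; omega) | norm_num
  | inr j =>
    have hj := j.isLt
    cases y with
    | inl k' =>
      have hk' := k'.isLt
      simp only [Tb, Sb, Sum.elim_inl, Sum.elim_inr]
      rw [show (∑ i, (if (j : ℕ) = m then (1:ℂ)/2 else 1) *
            ((ind (j : ℕ) i + ind (2*m - (j : ℕ)) i) / 2) *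
            (ind (k' : ℕ) i - ind (2*m - (k' : ℕ)) i))
          = ∑ i : Fin (2*m+1), (((if (j : ℕ) = m then (1:ℂ)/2 else 1)/2) * ind (j : ℕ) i +
              ((if (j : ℕ) = m then (1:ℂ)/2 else 1)/2) * ind (2*m - (j : ℕ)) i) *
            ((1 : ℂ) * ind (k' : ℕ) i + (-1 : ℂ) * ind (2*m - (k' : ℕ)) i) from
          Finset.sum_congr rfl (fun i _ => by ring),
        sum_comb _ _ _ _ _ _ (by omega) (by omega), Matrix.one_apply]
      simp only [reduceCtorEq, if_false]
      split_ifs <;> first | (exfalso; omega) | norm_num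
    | inr j' =>
      have hj' := j'.isLt
      simp only [Tb, Sb, Sum.elim_inr]
      rw [show (∑ i, (if (j : ℕ) = m then (1:ℂ)/2 else 1) *
            ((ind (j : ℕ) i + ind (2*m - (j : ℕ)) i) / 2) *
            (ind (j' : ℕ) i + ind (2*m - (j' : ℕ)) i))
          = ∑ i : Fin (2*m+1), (((if (j : ℕ) = m then (1:ℂ)/2 else 1)/2) * ind (j : ℕ) i +
              ((if (j : ℕ) = m then (1:ℂ)/2 else 1)/2) * ind (2*m - (j : ℕ)) i) *
            ((1 : ℂ) * ind (j' : ℕ) i + (1 : ℂ) * ind (2*m - (j' : ℕ)) i) from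
          Finset.sum_congr rfl (fun i _ => by ring),
        sum_comb _ _ _ _ _ _ (by omega) (by omega), Matrix.one_apply]
      simp only [Sum.inr.injEq, Fin.ext_iff]
      split_ifs <;> first | (exfalso; omega) | norm_num


lemma key (m : ℕ) (hm : 1 ≤ m) (t : ℂ) (r : ℕ → ℂ) (ε : ℂ)
    (hpal : ∀ j, 1 ≤ j → j ≤ m → r j = r (2 * m + 1 - j)) :
    tri (2*m+1) (fun i => if i = 0 ∨ i = 2*m then t + ε * r 0 else t)
        (fun i => r (i+1)) (fun i => r (i+1)) * Sb m
      = Sb m * Matrix.fromBlocks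
          (tri m (fun i => if i = 0 then t + ε * r 0 else t)
            (fun i => r (i+1)) (fun i => r (i+1))) 0 0
          (tri (m+1) (fun i => if i = 0 then t + ε * r 0 else t)
            (fun i => if i + 1 = m then 2 * r m else r (i+1)) (fun i => r (i+1))) := by
  ext i x
  have him := i.isLt
  rw [Matrix.mul_apply, Matrix.mul_apply, Fintype.sum_sum_type]
  cases x with
  | inl k =>
    have hk := k.isLt
    simp only [Sb, Sum.elim_inl, Sum.elim_inr, Matrix.fromBlocks_apply₁₁,
      Matrix.fromBlocks_apply₂₁, Matrix.zero_apply, mul_zero, Finset.sum_const_zero, add_zero]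
    rw [sum_mul_sub_ind, sum_mul_tri_col,
      ev_tri _ _ _ i (show (k : ℕ) < 2*m+1 by omega),
      ev_tri _ _ _ i (show 2*m - (k : ℕ) < 2*m+1 by omega)]
    beta_reduce
    rw [ev_gS i hk,
      if_pos (show 1 ≤ 2*m - (k : ℕ) by omega),
      show 2*m - (k : ℕ) - 1 + 1 = 2*m - (k : ℕ) from by omega,
      show r (2*m - (k : ℕ)) = r ((k : ℕ) + 1) from by
        rw [show 2*m - (k : ℕ) = 2*m+1-((k : ℕ)+1) from by omega]
        exact (hpal _ (by omega) (by omega)).symm,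
      show (if (k : ℕ) = 0 ∨ (k : ℕ) = 2*m then t + ε * r 0 else t)
          = (if (k : ℕ) = 0 then t + ε * r 0 else t) from by
        split_ifs <;> first | rfl | omega,
      show (if 2*m - (k : ℕ) = 0 ∨ 2*m - (k : ℕ) = 2*m then t + ε * r 0 else t)
          = (if (k : ℕ) = 0 then t + ε * r 0 else t) from by
        split_ifs <;> first | rfl | omega]
    by_cases hk1 : 1 ≤ (k : ℕ)
    · rw [if_pos hk1, ev_gS i (show (k : ℕ) - 1 < m by omega),
        show 2*m - ((k : ℕ) - 1) = 2*m - (k : ℕ) + 1 from by omega,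
        show r (2*m - (k : ℕ) + 1) = r ((k : ℕ) - 1 + 1) from by
          rw [show (k : ℕ) - 1 + 1 = (k : ℕ) from by omega,
            show 2*m - (k : ℕ) + 1 = 2*m+1-(k : ℕ) from by omega]
          exact (hpal _ hk1 (by omega)).symm]
      by_cases hkm : (k : ℕ) + 1 < m
      · rw [ev_gS i hkm, show 2*m - ((k : ℕ) + 1) = 2*m - (k : ℕ) - 1 from by omega]
        ring
      · rw [ev_ge _ (show m ≤ (k : ℕ) + 1 by omega),
          show 2*m - (k : ℕ) - 1 = (k : ℕ) + 1 from by omega]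
        ring
    · rw [if_neg hk1,
        show 2*m - (k : ℕ) + 1 = 2*m+1 from by omega,
        ind_of_le (show 2*m+1 ≤ 2*m+1 from le_rfl) i]
      by_cases hkm : (k : ℕ) + 1 < m
      · rw [ev_gS i hkm, show 2*m - ((k : ℕ) + 1) = 2*m - (k : ℕ) - 1 from by omega]
        ring
      · rw [ev_ge _ (show m ≤ (k : ℕ) + 1 by omega),
          show 2*m - (k : ℕ) - 1 = (k : ℕ) + 1 from by omega]
        ring
  | inr j =>
    have hj := j.isLt
    simp only [Sb, Sum.elim_inl, Sum.elim_inr, Matrix.fromBlocks_apply₁₂,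
      Matrix.fromBlocks_apply₂₂, Matrix.zero_apply, mul_zero, Finset.sum_const_zero, zero_add]
    rw [sum_mul_add_ind, sum_mul_tri_col,
      ev_tri _ _ _ i (show (j : ℕ) < 2*m+1 by omega),
      ev_tri _ _ _ i (show 2*m - (j : ℕ) < 2*m+1 by omega)]
    beta_reduce
    by_cases hjm : (j : ℕ) = m
    · rw [hjm, show 2*m - m = m from by omega,
        ev_gT i (show m < m+1 by omega), ev_gT i (show m - 1 < m+1 by omega),
        ev_ge _ (show m+1 ≤ m+1 from le_rfl),
        show 2*m - m = m from by omega,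
        show 2*m - (m - 1) = m+1 from by omega,
        show (if m = 0 ∨ m = 2*m then t + ε * r 0 else t) = t from by
          rw [if_neg]; omega,
        show (if m = 0 then t + ε * r 0 else t) = t from by rw [if_neg]; omega,
        if_pos hm, if_pos hm,
        show m - 1 + 1 = m from by omega, if_pos (rfl : m = m),
        show r (m + 1) = r m from by
          rw [show m + 1 = 2*m+1-m from by omega]
          exact (hpal m hm le_rfl).symm]
      ring
    · have hjm' : (j : ℕ) < m := by omega
      rw [ev_gT i (show (j : ℕ) < m+1 by omega), ev_gT i (show (j : ℕ)+1 < m+1 by omega),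
        show 2*m - ((j : ℕ)+1) = 2*m - (j : ℕ) - 1 from by omega,
        if_pos (show 1 ≤ 2*m - (j : ℕ) by omega),
        show 2*m - (j : ℕ) - 1 + 1 = 2*m - (j : ℕ) from by omega,
        show r (2*m - (j : ℕ)) = r ((j : ℕ) + 1) from by
          rw [show 2*m - (j : ℕ) = 2*m+1-((j : ℕ)+1) from by omega]
          exact (hpal _ (by omega) (by omega)).symm,
        show (if (j : ℕ) = 0 ∨ (j : ℕ) = 2*m then t + ε * r 0 else t)
            = (if (j : ℕ) = 0 then t + ε * r 0 else t) from by
          split_ifs <;> first | rfl | omega,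
        show (if 2*m - (j : ℕ) = 0 ∨ 2*m - (j : ℕ) = 2*m then t + ε * r 0 else t)
            = (if (j : ℕ) = 0 then t + ε * r 0 else t) from by
          split_ifs <;> first | rfl | omega]
      by_cases hj1 : 1 ≤ (j : ℕ)
      · rw [if_pos hj1, if_pos hj1,
          show (if (j : ℕ) - 1 + 1 = m then 2 * r m else r ((j : ℕ) - 1 + 1))
              = r ((j : ℕ) - 1 + 1) from by rw [if_neg]; omega,
          ev_gT i (show (j : ℕ) - 1 < m+1 by omega),
          show 2*m - ((j : ℕ) - 1) = 2*m - (j : ℕ) + 1 from by omega,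
          show r (2*m - (j : ℕ) + 1) = r ((j : ℕ) - 1 + 1) from by
            rw [show (j : ℕ) - 1 + 1 = (j : ℕ) from by omega,
              show 2*m - (j : ℕ) + 1 = 2*m+1-(j : ℕ) from by omega]
            exact (hpal _ hj1 (by omega)).symm]
        ring
      · rw [if_neg hj1, if_neg hj1,
          show 2*m - (j : ℕ) + 1 = 2*m+1 from by omega,
          ind_of_le (show 2*m+1 ≤ 2*m+1 from le_rfl) i]
        ring

end Stmt3Aux

/-- Lemma 2.2 (case `n + 1` odd, `n = 2m`): factorization of the determinant of the
symmetric tridiagonal matrix with corner diagonal entries `t ± r 0` and palindromic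
off-diagonal entries, into determinants of sizes `m` and `m + 1`. -/
theorem stmt_3 (m : ℕ) (hm : 1 ≤ m) (t : ℂ) (r : ℕ → ℂ) (ε : ℂ) (hε : ε = 1 ∨ ε = -1)
    (hpal : ∀ j, 1 ≤ j → j ≤ m → r j = r (2 * m + 1 - j)) :
    (tri (2 * m + 1) (fun i => if i = 0 ∨ i = 2 * m then t + ε * r 0 else t)
        (fun i => r (i + 1)) (fun i => r (i + 1))).det =
      (tri m (fun i => if i = 0 then t + ε * r 0 else t)
          (fun i => r (i + 1)) (fun i => r (i + 1))).det *
      (tri (m + 1) (fun i => if i = 0 then t + ε * r 0 else t)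
          (fun i => r (i + 1))
          (fun i => if i + 1 = m then 2 * r m else r (i + 1))).det := by
  classical
  open Stmt3Aux in
  set M := tri (2 * m + 1) (fun i => if i = 0 ∨ i = 2 * m then t + ε * r 0 else t)
      (fun i => r (i + 1)) (fun i => r (i + 1)) with hM
  set P := tri m (fun i => if i = 0 then t + ε * r 0 else t)
      (fun i => r (i + 1)) (fun i => r (i + 1)) with hP
  set Q := tri (m + 1) (fun i => if i = 0 then t + ε * r 0 else t)
      (fun i => r (i + 1)) (fun i => if i + 1 = m then 2 * r m else r (i + 1)) with hQ
  set Q' := tri (m + 1) (fun i => if i = 0 then t + ε * r 0 else t)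
      (fun i => if i + 1 = m then 2 * r m else r (i + 1)) (fun i => r (i + 1)) with hQ'
  have hQQ' : Q.det = Q'.det := by
    rw [← Matrix.det_transpose Q, hQ, Stmt3Aux.tri_transpose, hQ']
  set N := Matrix.fromBlocks P 0 0 Q' with hN
  have hkey : M * Stmt3Aux.Sb m = Stmt3Aux.Sb m * N :=
    Stmt3Aux.key m hm t r ε hpal
  have hTS : Stmt3Aux.Tb m * Stmt3Aux.Sb m = 1 := Stmt3Aux.TS m hm
  -- reindexing equivalence
  have hcard : 2 * m + 1 = m + (m + 1) := by omega
  set e : Fin (2 * m + 1) ≃ Fin m ⊕ Fin (m + 1) :=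
    (finCongr hcard).trans finSumFinEquiv.symm with he
  set Ssq : Matrix (Fin (2 * m + 1)) (Fin (2 * m + 1)) ℂ :=
    (Stmt3Aux.Sb m).submatrix id e with hSsq
  set Tsq : Matrix (Fin (2 * m + 1)) (Fin (2 * m + 1)) ℂ :=
    (Stmt3Aux.Tb m).submatrix e id with hTsq
  set Nsq : Matrix (Fin (2 * m + 1)) (Fin (2 * m + 1)) ℂ := N.submatrix e e with hNsq
  have hTS_sq : Tsq * Ssq = 1 := by
    have h := Matrix.submatrix_mul_equiv (Stmt3Aux.Tb m) (Stmt3Aux.Sb m)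
      (⇑e) (Equiv.refl (Fin (2 * m + 1))) (⇑e)
    simp only [Equiv.coe_refl] at h
    rw [hTsq, hSsq, h, hTS, Matrix.submatrix_one_equiv]
  have hSdet : Ssq.det ≠ 0 := by
    have := congrArg Matrix.det hTS_sq
    rw [Matrix.det_mul, Matrix.det_one] at this
    intro h0
    rw [h0, mul_zero] at this
    exact zero_ne_one this
  have hMS : M * Ssq = Ssq * Nsq := by
    have h1 := Matrix.submatrix_mul_equiv M (Stmt3Aux.Sb m)
      (id : Fin (2 * m + 1) → Fin (2 * m + 1)) (Equiv.refl (Fin (2 * m + 1))) (⇑e)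
    have h2 := Matrix.submatrix_mul_equiv (Stmt3Aux.Sb m) N
      (id : Fin (2 * m + 1) → Fin (2 * m + 1)) e (⇑e)
    simp only [Equiv.coe_refl, Matrix.submatrix_id_id] at h1 h2
    rw [hSsq, hNsq, h1, h2, hkey]
  have hdet : M.det * Ssq.det = Ssq.det * Nsq.det := by
    rw [← Matrix.det_mul, ← Matrix.det_mul, hMS]
  have hNdet : Nsq.det = P.det * Q'.det := by
    rw [hNsq, Matrix.det_submatrix_equiv_self, hN, Matrix.det_fromBlocks_zero₂₁]
  rw [hNdet] at hdet
  rw [hQQ']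
  have := mul_right_cancel₀ hSdet (by rw [hdet]; ring : M.det * Ssq.det = (P.det * Q'.det) * Ssq.det)
  exact this
end

section
/- Let n ≥ 2 with n+1 even and r_0, ..., r_n complex with r_j = r_{n-j+1} for j = 1, ..., (n-1)/2. Let N± be the (n+1)×(n+1) symmetric matrices with diagonal t, off-diagonal entries (N±)_{j,j+1} = (N±)_{j+1,j} = r_{j-1} for j = 1, ..., n, and corner entries (N±)_{1,n+1} = (N±)_{n+1,1} = ± r_n. Then det(N±) = det(E±)·det(F∓), where E± is the ((n+1)/2)×((n+1)/2) symmetric tridiagonal matrix with diagonal (t ± r_0, t, ..., t, t + r_{(n+1)/2}) and off-diagonals r_1, ..., r_{(n−1)/2}, and F∓ is the ((n+1)/2)×((n+1)/2) symmetric tridiagonal matrix with diagonal (t ∓ r_0, t, ..., t, t − r_{(n+1)/2}) and off-diagonals r_1, ..., r_{(n−1)/2}. -/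
open Matrix

section Aux

lemma rowpick {k : ℕ} (σ : Fin k → Fin k) (c : Fin k → ℂ) (B : Matrix (Fin k) (Fin k) ℂ) :
    (Matrix.of fun i j => if j = σ i then c i else 0) * B =
      Matrix.of fun i j => c i * B (σ i) j := by
  ext i j
  rw [Matrix.mul_apply]
  simp [ite_mul, Finset.sum_ite_eq']

lemma colpick {k : ℕ} (τ : Fin k → Fin k) (c : Fin k → ℂ) (B : Matrix (Fin k) (Fin k) ℂ) :
    B * (Matrix.of fun i j => if i = τ j then c j else 0) =
      Matrix.of fun i j => B i (τ j) * c j := by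
  ext i j
  rw [Matrix.mul_apply]
  simp [mul_ite, Finset.sum_ite_eq]

def s1 (m : ℕ) (i : Fin (2*m+2)) : Fin (2*m+2) :=
  ⟨if (i:ℕ) = 0 ∨ (i:ℕ) = m+1 then 0 else if (i:ℕ) ≤ m then (i:ℕ)+1 else (i:ℕ)-m,
   by have := i.isLt; split_ifs <;> omega⟩

def s2 (m : ℕ) (i : Fin (2*m+2)) : Fin (2*m+2) :=
  ⟨if (i:ℕ) = 0 ∨ (i:ℕ) = m+1 then 1 else if (i:ℕ) ≤ m then 2*m+2-(i:ℕ) else 3*m+3-(i:ℕ),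
   by have := i.isLt; split_ifs <;> omega⟩

def c1 (m : ℕ) (ε : ℂ) (i : Fin (2*m+2)) : ℂ := if (i:ℕ) = m+1 then -1 else 1

def c2 (m : ℕ) (ε : ℂ) (i : Fin (2*m+2)) : ℂ :=
  if (i:ℕ) = 0 ∨ (i:ℕ) = m+1 then 1 else if (i:ℕ) ≤ m then ε else -ε

def t1 (m : ℕ) (j : Fin (2*m+2)) : Fin (2*m+2) :=
  ⟨if (j:ℕ) ≤ 1 then 0 else if (j:ℕ) ≤ m+1 then (j:ℕ)-1 else 2*m+2-(j:ℕ),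
   by have := j.isLt; split_ifs <;> omega⟩

def t2 (m : ℕ) (j : Fin (2*m+2)) : Fin (2*m+2) :=
  ⟨if (j:ℕ) ≤ 1 then m+1 else if (j:ℕ) ≤ m+1 then m+(j:ℕ) else 3*m+3-(j:ℕ),
   by have := j.isLt; split_ifs <;> omega⟩

def d1 (m : ℕ) (ε : ℂ) (j : Fin (2*m+2)) : ℂ := if (j:ℕ) ≤ m+1 then 1 else ε

def d2 (m : ℕ) (ε : ℂ) (j : Fin (2*m+2)) : ℂ :=
  if (j:ℕ) = 0 then -1 else if (j:ℕ) ≤ m+1 then 1 else -ε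

def Pm (m : ℕ) (ε : ℂ) : Matrix (Fin (2*m+2)) (Fin (2*m+2)) ℂ :=
  (Matrix.of fun i j => if j = s1 m i then c1 m ε i else 0) +
  (Matrix.of fun i j => if j = s2 m i then c2 m ε i else 0)

def Nm (m : ℕ) (t : ℂ) (r : ℕ → ℂ) (ε : ℂ) : Matrix (Fin (2*m+2)) (Fin (2*m+2)) ℂ :=
  tri (2 * m + 2) (fun _ => t) (fun i => r i) (fun i => r i) +
    Matrix.of fun i j : Fin (2 * m + 2) =>
      if (i = 0 ∧ j = Fin.last (2 * m + 1)) ∨ (i = Fin.last (2 * m + 1) ∧ j = 0) then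
        ε * r (2 * m + 1) else 0

def Dm (m : ℕ) (t : ℂ) (r : ℕ → ℂ) (ε : ℂ) : Matrix (Fin (2*m+2)) (Fin (2*m+2)) ℂ :=
  Matrix.of fun i j =>
    if (i:ℕ) < m+1 ∧ (j:ℕ) < m+1 then
      (if (i:ℕ) = (j:ℕ) then
        (if (i:ℕ) = 0 then t + r 0 else if (i:ℕ) = m then t + ε * r (m+1) else t)
       else if (i:ℕ)+1 = (j:ℕ) then r ((i:ℕ)+1)
       else if (j:ℕ)+1 = (i:ℕ) then r ((j:ℕ)+1) else 0)
    else if m+1 ≤ (i:ℕ) ∧ m+1 ≤ (j:ℕ) then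
      (if (i:ℕ)-(m+1) = (j:ℕ)-(m+1) then
        (if (i:ℕ)-(m+1) = 0 then t - r 0 else if (i:ℕ)-(m+1) = m then t - ε * r (m+1) else t)
       else if (i:ℕ)-(m+1)+1 = (j:ℕ)-(m+1) then r ((i:ℕ)-(m+1)+1)
       else if (j:ℕ)-(m+1)+1 = (i:ℕ)-(m+1) then r ((j:ℕ)-(m+1)+1) else 0)
    else 0

def Bp (m : ℕ) (t : ℂ) (r : ℕ → ℂ) (ε : ℂ) : Matrix (Fin (m+1)) (Fin (m+1)) ℂ :=
  tri (m+1) (fun i => if i = 0 then t + r 0 else if i = m then t + ε * r (m+1) else t)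
    (fun i => r (i+1)) (fun i => r (i+1))

def Bq (m : ℕ) (t : ℂ) (r : ℕ → ℂ) (ε : ℂ) : Matrix (Fin (m+1)) (Fin (m+1)) ℂ :=
  tri (m+1) (fun i => if i = 0 then t - r 0 else if i = m then t - ε * r (m+1) else t)
    (fun i => r (i+1)) (fun i => r (i+1))

def eqv (m : ℕ) : (Fin (m+1) ⊕ Fin (m+1)) ≃ Fin (2*m+2) where
  toFun x := Sum.elim (fun a : Fin (m+1) => (⟨a, by have := a.isLt; omega⟩ : Fin (2*m+2)))
    (fun a : Fin (m+1) => ⟨m+1+a, by have := a.isLt; omega⟩) x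
  invFun i := if h : (i:ℕ) < m+1 then .inl ⟨i, h⟩ else .inr ⟨(i:ℕ)-(m+1), by have := i.isLt; omega⟩
  left_inv := by
    rintro (a | a) <;> have := a.isLt <;> dsimp only [Sum.elim_inl, Sum.elim_inr]
    · rw [dif_pos (show ((⟨(a:ℕ), by omega⟩ : Fin (2*m+2)):ℕ) < m+1 from by simpa using this)]
    · rw [dif_neg (show ¬ ((⟨m+1+(a:ℕ), by omega⟩ : Fin (2*m+2)):ℕ) < m+1 from by simp; omega)]
      congr 1
      simp [Fin.ext_iff]
  right_inv := by
    intro i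
    have := i.isLt
    dsimp only
    by_cases h : (i:ℕ) < m+1
    · rw [dif_pos h]
      simp [Fin.ext_iff]
    · rw [dif_neg h]
      dsimp only [Sum.elim_inr]
      simp [Fin.ext_iff]
      omega

set_option maxHeartbeats 1000000 in
lemma colform (m : ℕ) (hm : 1 ≤ m) (ε : ℂ) :
    Pm m ε =
      (Matrix.of fun i j => if i = t1 m j then d1 m ε j else 0) +
      (Matrix.of fun i j => if i = t2 m j then d2 m ε j else 0) := by
  ext i j
  obtain ⟨i, hi⟩ := i
  obtain ⟨j, hj⟩ := j
  simp only [Pm, s1, s2, c1, c2, t1, t2, d1, d2, Matrix.add_apply, Matrix.of_apply, Fin.ext_iff]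
  rcases (show i = 0 ∨ (1 ≤ i ∧ i ≤ m) ∨ i = m+1 ∨ (m+2 ≤ i ∧ i ≤ 2*m+1) from by omega) with
    rfl | ⟨h1, h2⟩ | rfl | ⟨h1, h2⟩ <;>
  rcases (show j = 0 ∨ j = 1 ∨ (2 ≤ j ∧ j ≤ m+1) ∨ (m+2 ≤ j ∧ j ≤ 2*m+1) from by omega) with
    rfl | rfl | ⟨g1, g2⟩ | ⟨g1, g2⟩ <;>
  simp (disch := omega) only [if_pos, if_neg, eq_self_iff_true, true_or, or_true, false_or,
    or_false, if_true, if_false] <;>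
  ((try split_ifs) <;> first | rfl | ring1 | (exfalso; omega))

lemma PPT (m : ℕ) (hm : 1 ≤ m) (ε : ℂ) (hε2 : ε * ε = 1) :
    Pm m ε * (Pm m ε)ᵀ = (2:ℂ) • (1 : Matrix (Fin (2*m+2)) (Fin (2*m+2)) ℂ) := by
  have htr : (Pm m ε)ᵀ =
      (Matrix.of fun i j => if i = s1 m j then c1 m ε j else 0) +
      (Matrix.of fun i j => if i = s2 m j then c2 m ε j else 0) := by
    ext i j
    simp [Pm, Matrix.transpose_apply]
  rw [htr, Matrix.mul_add, colpick, colpick]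
  ext i j
  obtain ⟨i, hi⟩ := i
  obtain ⟨j, hj⟩ := j
  simp only [Pm, s1, s2, c1, c2, Matrix.add_apply, Matrix.of_apply, Matrix.smul_apply,
    Matrix.one_apply, Fin.ext_iff, smul_eq_mul, mul_ite, mul_one, mul_zero]
  rcases (show i = 0 ∨ (1 ≤ i ∧ i ≤ m) ∨ i = m+1 ∨ (m+2 ≤ i ∧ i ≤ 2*m+1) from by omega) with
    rfl | ⟨h1, h2⟩ | rfl | ⟨h1, h2⟩ <;>
  rcases (show j = 0 ∨ (1 ≤ j ∧ j ≤ m) ∨ j = m+1 ∨ (m+2 ≤ j ∧ j ≤ 2*m+1) from by omega) with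
    rfl | ⟨g1, g2⟩ | rfl | ⟨g1, g2⟩ <;>
  simp (disch := omega) only [if_pos, if_neg, eq_self_iff_true, true_or, or_true, false_or,
    or_false, if_true, if_false] <;>
  ((try split_ifs) <;>
    first | rfl | ring1 | (exfalso; omega) | linear_combination hε2 |
      linear_combination (-1:ℂ) * hε2)

set_option maxHeartbeats 4000000 in
lemma main_id (m : ℕ) (hm : 1 ≤ m) (t : ℂ) (r : ℕ → ℂ) (ε : ℂ) (hε2 : ε * ε = 1)
    (hpal : ∀ j, 1 ≤ j → j ≤ m → r j = r (2 * m + 2 - j)) :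
    Pm m ε * Nm m t r ε = Dm m t r ε * Pm m ε := by
  have pal2 : ∀ X Y : ℕ, X + Y = 2*m+2 → 1 ≤ X → X ≤ m → r X = r Y := by
    intro X Y h hX1 hX2
    rw [hpal X hX1 hX2]
    congr 1
    omega
  have hP1 : r 1 = r (2*m+1) := pal2 1 (2*m+1) (by omega) (by omega) (by omega)
  have hrow : Pm m ε * Nm m t r ε =
      Matrix.of (fun i j => c1 m ε i * Nm m t r ε (s1 m i) j +
        c2 m ε i * Nm m t r ε (s2 m i) j) := by
    rw [Pm, Matrix.add_mul, rowpick, rowpick]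
    rfl
  have hcol : Dm m t r ε * Pm m ε =
      Matrix.of (fun i j => Dm m t r ε i (t1 m j) * d1 m ε j +
        Dm m t r ε i (t2 m j) * d2 m ε j) := by
    rw [colform m hm ε, Matrix.mul_add, colpick, colpick]
    rfl
  rw [hrow, hcol]
  ext i j
  obtain ⟨i, hi⟩ := i
  obtain ⟨j, hj⟩ := j
  have hz : ((0 : Fin (2*m+2)) : ℕ) = 0 := rfl
  simp only [Nm, Dm, tri, s1, s2, c1, c2, t1, t2, d1, d2, Matrix.add_apply, Matrix.of_apply,
    Fin.ext_iff, Fin.val_last, hz]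
  rcases (show i = 0 ∨ (1 ≤ i ∧ i ≤ m) ∨ i = m+1 ∨ (m+2 ≤ i ∧ i ≤ 2*m+1) from by omega) with
    rfl | ⟨h1, h2⟩ | rfl | ⟨h1, h2⟩ <;>
  rcases (show j = 0 ∨ j = 1 ∨ (2 ≤ j ∧ j ≤ m+1) ∨ (m+2 ≤ j ∧ j ≤ 2*m+1) from by omega) with
    rfl | rfl | ⟨g1, g2⟩ | ⟨g1, g2⟩ <;>
  simp (disch := omega) only [if_pos, if_neg, eq_self_iff_true, true_or, or_true, false_or,
    or_false, if_true, if_false, true_and, and_true, false_and, and_false] <;>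
  ((try split_ifs) <;>
    (try simp (disch := omega) only [Nat.sub_add_cancel, Nat.sub_self, zero_add]) <;>
    first
      | rfl | ring1 | (exfalso; omega)
      | (congr 1; omega)
      | linear_combination hε2
      | linear_combination (-1:ℂ) * hε2
      | linear_combination ε * hP1
      | linear_combination (-ε) * hP1
      | linear_combination r (2*m+1) * hε2 - hP1
      | linear_combination (-(r (2*m+1))) * hε2 + hP1
      | (rw [show j = m+1 from by omega]; ring1)
      | (rw [show i = m from by omega]; linear_combination r (m+1) * hε2)
      | (rw [show i = m from by omega]; linear_combination (-(r (m+1))) * hε2)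
      | (rw [show i-m = m+1 from by omega]; linear_combination (-(r (m+1))) * hε2)
      | (rw [show i-(m+1)+1 = i-m from by omega]; ring1)
      | (rw [show m+j-(m+1)+1 = j from by omega]; ring1)
      | (rw [show 2*m+2-j+1 = i from by omega];
          linear_combination (-ε) * pal2 i (2*m+2-i) (by omega) (by omega) (by omega))
      | linear_combination (-ε) * pal2 (i+1) j (by omega) (by omega) (by omega)
      | (rw [show 3*m+3-j-(m+1)+1 = i-(m+1) from by omega,
            show 3*m+3-i = 2*m+2-(i-(m+1)) from by omega];
          linear_combination ε * pal2 (i-(m+1)) (2*m+2-(i-(m+1))) (by omega) (by omega) (by omega))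
      | (rw [show i-(m+1)+1 = i-m from by omega];
          linear_combination ε * pal2 (i-m) j (by omega) (by omega) (by omega)))

lemma detDm (m : ℕ) (t : ℂ) (r : ℕ → ℂ) (ε : ℂ) :
    (Dm m t r ε).det = (Bp m t r ε).det * (Bq m t r ε).det := by
  have h : Dm m t r ε =
      (Matrix.fromBlocks (Bp m t r ε) 0 0 (Bq m t r ε)).submatrix (eqv m).symm (eqv m).symm := by
    ext i j
    have hi := i.isLt
    have hj := j.isLt
    rcases lt_or_ge (i:ℕ) (m+1) with h1 | h1 <;> rcases lt_or_ge (j:ℕ) (m+1) with h2 | h2 <;>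
      simp only [Dm, Bp, Bq, tri, eqv, Matrix.submatrix_apply, Equiv.symm, Equiv.coe_fn_mk,
        Matrix.of_apply] <;>
      [rw [dif_pos h1, dif_pos h2]; rw [dif_pos h1, dif_neg (by omega)];
       rw [dif_neg (by omega), dif_pos h2]; rw [dif_neg (by omega), dif_neg (by omega)]] <;>
      simp only [Matrix.fromBlocks_apply₁₁, Matrix.fromBlocks_apply₁₂, Matrix.fromBlocks_apply₂₁,
        Matrix.fromBlocks_apply₂₂, Matrix.of_apply, Matrix.zero_apply] <;>
      simp (disch := omega) only [if_pos, if_neg] <;> rfl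
  rw [h, Matrix.det_submatrix_equiv_self, Matrix.det_fromBlocks_zero₂₁]

theorem stmt_5' (m : ℕ) (hm : 1 ≤ m) (t : ℂ) (r : ℕ → ℂ) (ε : ℂ) (hε : ε = 1 ∨ ε = -1)
    (hpal : ∀ j, 1 ≤ j → j ≤ m → r j = r (2 * m + 2 - j)) :
    (Nm m t r ε).det = (Bp m t r ε).det * (Bq m t r ε).det := by
  have hε2 : ε * ε = 1 := by rcases hε with rfl | rfl <;> norm_num
  have hP : (Pm m ε).det ≠ 0 := by
    intro h0
    have := congrArg Matrix.det (PPT m hm ε hε2)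
    rw [Matrix.det_mul, Matrix.det_transpose, Matrix.det_smul, Matrix.det_one, h0] at this
    simp at this
    exact pow_ne_zero _ two_ne_zero this.symm
  have := congrArg Matrix.det (main_id m hm t r ε hε2 hpal)
  rw [Matrix.det_mul, Matrix.det_mul, mul_comm ((Dm m t r ε).det)] at this
  have hN := mul_left_cancel₀ hP this
  rw [hN, detDm]

end Aux

/-- Lemma 2.1 (case `n + 1` even, `n = 2m + 1`): determinant factorization of the
"almost tridiagonal" matrix `N±` (diagonal `t`, off-diagonals `r 0, …, r (n-1)`,
corners `± r n`) as `det E± · det F∓`. -/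
theorem stmt_5 (m : ℕ) (hm : 1 ≤ m) (t : ℂ) (r : ℕ → ℂ) (ε : ℂ) (hε : ε = 1 ∨ ε = -1)
    (hpal : ∀ j, 1 ≤ j → j ≤ m → r j = r (2 * m + 2 - j)) :
    (tri (2 * m + 2) (fun _ => t) (fun i => r i) (fun i => r i) +
        Matrix.of fun i j : Fin (2 * m + 2) =>
          if (i = 0 ∧ j = Fin.last (2 * m + 1)) ∨ (i = Fin.last (2 * m + 1) ∧ j = 0) then
            ε * r (2 * m + 1) else 0).det =
      (tri (m + 1)
          (fun i => if i = 0 then t + ε * r 0 else if i = m then t + r (m + 1) else t)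
          (fun i => r (i + 1)) (fun i => r (i + 1))).det *
      (tri (m + 1)
          (fun i => if i = 0 then t - ε * r 0 else if i = m then t - r (m + 1) else t)
          (fun i => r (i + 1)) (fun i => r (i + 1))).det := by
  have key := stmt_5' m hm t r ε hε hpal
  rcases hε with rfl | rfl
  · rw [show (tri (2 * m + 2) (fun _ => t) (fun i => r i) (fun i => r i) +
        Matrix.of fun i j : Fin (2 * m + 2) =>
          if (i = 0 ∧ j = Fin.last (2 * m + 1)) ∨ (i = Fin.last (2 * m + 1) ∧ j = 0) then
            (1:ℂ) * r (2 * m + 1) else 0) = Nm m t r 1 from rfl, key]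
    have hd1 : (fun i : ℕ => if i = 0 then t + r 0 else if i = m then t + (1:ℂ) * r (m+1) else t)
        = (fun i : ℕ => if i = 0 then t + (1:ℂ) * r 0 else if i = m then t + r (m+1) else t) := by
      funext i; split_ifs <;> ring
    have hd2 : (fun i : ℕ => if i = 0 then t - r 0 else if i = m then t - (1:ℂ) * r (m+1) else t)
        = (fun i : ℕ => if i = 0 then t - (1:ℂ) * r 0 else if i = m then t - r (m+1) else t) := by
      funext i; split_ifs <;> ring
    unfold Bp Bq
    rw [hd1, hd2]
  · rw [show (tri (2 * m + 2) (fun _ => t) (fun i => r i) (fun i => r i) +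
        Matrix.of fun i j : Fin (2 * m + 2) =>
          if (i = 0 ∧ j = Fin.last (2 * m + 1)) ∨ (i = Fin.last (2 * m + 1) ∧ j = 0) then
            (-1:ℂ) * r (2 * m + 1) else 0) = Nm m t r (-1) from rfl, key, mul_comm]
    have hd1 : (fun i : ℕ => if i = 0 then t + r 0 else if i = m then t + (-1:ℂ) * r (m+1) else t)
        = (fun i : ℕ => if i = 0 then t - (-1:ℂ) * r 0 else if i = m then t - r (m+1) else t) := by
      funext i; split_ifs <;> ring
    have hd2 : (fun i : ℕ => if i = 0 then t - r 0 else if i = m then t - (-1:ℂ) * r (m+1) else t)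
        = (fun i : ℕ => if i = 0 then t + (-1:ℂ) * r 0 else if i = m then t + r (m+1) else t) := by
      funext i; split_ifs <;> ring
    unfold Bp Bq
    rw [hd1, hd2]
end

section
/- Let J_m be the m×m exchange matrix (antidiagonal of ones) and Q± the (n+1)×(n+1) matrix with Q_{j,j+1} = 1 for 1 ≤ j ≤ n and Q_{n+1,1} = ±1, all other entries 0. Then Q± is invertible with det(Q±) = ±(−1)^n, and for the almost-tridiagonal matrix N± of Lemma 2.1 (diagonal t, off-diagonals r_j, corners ±r_n with palindromic r_j = r_{n-j+1}), the matrix Q± N± Q±^{-1} is centrosymmetric: J_{n+1} (Q± N± Q±^{-1}) J_{n+1} = Q± N± Q±^{-1}. -/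
open Matrix

lemma keyN (n : ℕ) (hn : 2 ≤ n) (t : ℂ) (r : ℕ → ℂ) (ε : ℂ) (hε2 : ε * ε = 1)
    (hpal : ∀ j, 1 ≤ j → 2 * j ≤ n → r j = r (n - j + 1))
    (En : ℕ → ℕ → ℂ)
    (hEn : ∀ p q, En p q =
      (if p = q then t else if p + 1 = q then r p else if q + 1 = p then r q else 0) +
      (if (p = 0 ∧ q = n) ∨ (p = n ∧ q = 0) then ε * r n else 0))
    (Dn : ℕ → ℂ) (hDn : ∀ k, Dn k = if k = n then ε else 1)
    (A B : ℕ → ℕ) (hA : ∀ k, k ≤ n → A k = if k = 0 then 0 else n + 1 - k)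
    (hB : ∀ k, B k = if k = n then 0 else k + 1) :
    ∀ i j, i ≤ n → j ≤ n →
      Dn (n - i) * En (A i) (A j) * Dn (n - j) = Dn i * En (B i) (B j) * Dn j := by
  have hsym : ∀ p q, En p q = En q p := by
    intro p q
    rw [hEn, hEn]
    congr 1 <;> split_ifs <;>
      first | rfl | contradiction | (exfalso; omega) | (exfalso; simp_all <;> omega)
  have hEt : ∀ p, En p p = t := by
    intro p; rw [hEn]; split_ifs <;>
      first | ring1 | contradiction | (exfalso; omega) | (exfalso; simp_all <;> omega)
  have hEsup : ∀ p, En p (p + 1) = r p := by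
    intro p; rw [hEn]; split_ifs <;>
      first | ring1 | contradiction | (exfalso; omega) | (exfalso; simp_all <;> omega)
  have hEsub : ∀ p, En (p + 1) p = r p := by
    intro p; rw [hEn]; split_ifs <;>
      first | ring1 | contradiction | (exfalso; omega) | (exfalso; simp_all <;> omega)
  have hE0n : En 0 n = ε * r n := by
    rw [hEn]; split_ifs <;>
      first | ring1 | contradiction | (exfalso; omega) | (exfalso; simp_all <;> omega)
  have hEn0 : En n 0 = ε * r n := by
    rw [hEn]; split_ifs <;>
      first | ring1 | contradiction | (exfalso; omega) | (exfalso; simp_all <;> omega)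
  have hEfar : ∀ p q, ¬(p = q) → ¬(p + 1 = q) → ¬(q + 1 = p) →
      ¬((p = 0 ∧ q = n) ∨ (p = n ∧ q = 0)) → En p q = 0 := by
    intro p q h1 h2 h3 h4; rw [hEn]; split_ifs <;>
      first | ring1 | contradiction | (exfalso; omega) | (exfalso; simp_all <;> omega)
  have hDd : ∀ k, Dn k * Dn k = 1 := by
    intro k; rw [hDn]; split_ifs <;> first | exact hε2 | ring1
  have d1 : Dn n = ε := by rw [hDn, if_pos rfl]
  have d2 : ∀ k, k ≠ n → Dn k = 1 := fun k hk => by rw [hDn, if_neg hk]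
  have hr1 : r 1 = r n := by
    have h := hpal 1 le_rfl (by omega)
    rwa [show n - 1 + 1 = n by omega] at h
  have hmid : ∀ i, 1 ≤ i → i + 2 ≤ n → r (n - i) = r (i + 1) := by
    intro i h1 h2
    by_cases hc : 2 * (i + 1) ≤ n
    · have h := hpal (i + 1) (by omega) hc
      rw [show n - (i + 1) + 1 = n - i by omega] at h
      exact h.symm
    · by_cases hc2 : n ≤ 2 * i
      · have h := hpal (n - i) (by omega) (by omega)
        rwa [show n - (n - i) + 1 = i + 1 by omega] at h
      · rw [show n - i = i + 1 by omega]
  suffices H : ∀ i j, i ≤ n → j ≤ n → i ≤ j →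
      Dn (n - i) * En (A i) (A j) * Dn (n - j) = Dn i * En (B i) (B j) * Dn j by
    intro i j hi hj
    rcases le_total i j with h | h
    · exact H i j hi hj h
    · have key := H j i hj hi h
      rw [hsym (A j) (A i), hsym (B j) (B i)] at key
      linear_combination key
  intro i j hi hj hij
  by_cases hijEq : i = j
  · subst hijEq
    rw [hEt, hEt]
    linear_combination t * hDd (n - i) - t * hDd i
  by_cases hAdj : j = i + 1
  · subst hAdj
    by_cases hi0 : i = 0
    · subst hi0
      have eA0 : A 0 = 0 := by rw [hA 0 (by omega), if_pos rfl]
      have eA1 : A (0 + 1) = n := by rw [hA (0 + 1) (by omega), if_neg (by omega)]; omega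
      have eB0 : B 0 = 0 + 1 := by rw [hB, if_neg (by omega)]
      have eB1 : B (0 + 1) = (0 + 1) + 1 := by rw [hB, if_neg (by omega)]
      rw [Nat.sub_zero, eA0, eA1, eB0, eB1, hE0n, hEsup, d1,
        d2 (n - (0 + 1)) (by omega), d2 0 (by omega), d2 (0 + 1) (by omega), hr1]
      linear_combination (r n) * hε2
    by_cases hin : i + 1 = n
    · have eAi : A i = 1 + 1 := by rw [hA i (by omega), if_neg hi0]; omega
      have eAj : A (i + 1) = 1 := by rw [hA (i + 1) (by omega), if_neg (by omega)]; omega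
      have eBi : B i = n := by rw [hB, if_neg (by omega)]; omega
      have eBj : B (i + 1) = 0 := by rw [hB, if_pos hin]
      have eDj : Dn (i + 1) = ε := by rw [hDn, if_pos hin]
      rw [eAi, eAj, eBi, eBj, hEsub, hEn0, eDj, d2 (n - i) (by omega),
        d2 (n - (i + 1)) (by omega), d2 i (by omega), hr1]
      linear_combination (- r n) * hε2
    · have eAi : A i = (n - i - 1) + 1 + 1 := by rw [hA i (by omega), if_neg hi0]; omega
      have eAj : A (i + 1) = (n - i - 1) + 1 := by
        rw [hA (i + 1) (by omega), if_neg (by omega)]; omega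
      have eBi : B i = i + 1 := by rw [hB, if_neg (by omega)]
      have eBj : B (i + 1) = (i + 1) + 1 := by rw [hB, if_neg (by omega)]
      rw [eAi, eAj, eBi, eBj, hEsub, hEsup, d2 (n - i) (by omega),
        d2 (n - (i + 1)) (by omega), d2 i (by omega), d2 (i + 1) (by omega)]
      rw [show n - i - 1 + 1 = n - i by omega, hmid i (by omega) (by omega)]
  by_cases hcor : i = 0 ∧ j = n
  · obtain ⟨hi0, hjn⟩ := hcor
    rw [hi0, hjn]
    have eA0 : A 0 = 0 := by rw [hA 0 (by omega), if_pos rfl]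
    have eAn : A n = 0 + 1 := by rw [hA n le_rfl, if_neg (by omega)]; omega
    have eB0 : B 0 = 0 + 1 := by rw [hB, if_neg (by omega)]
    have eBn : B n = 0 := by rw [hB, if_pos rfl]
    rw [Nat.sub_zero, Nat.sub_self, eA0, eAn, eB0, eBn, hEsup, hEsub, d1,
      d2 0 (by omega)]
    ring
  · have hfar : i + 2 ≤ j := by omega
    have EA : En (A i) (A j) = 0 := by
      refine hEfar _ _ ?_ ?_ ?_ ?_ <;>
        rw [hA i (by omega), hA j (by omega)] <;> split_ifs <;>
        · try simp only [false_and, and_false, false_or, or_false, not_false_eq_true]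
          try omega
    have EB : En (B i) (B j) = 0 := by
      refine hEfar _ _ ?_ ?_ ?_ ?_ <;>
        simp only [hB] <;> split_ifs <;>
        · try simp only [false_and, and_false, false_or, or_false, not_false_eq_true]
          try omega
    rw [EA, EB]
    ring

/-- The cyclic-shift-with-sign matrix `Q±` is invertible with `det Q± = ±(-1)ⁿ`, and
conjugating the almost-tridiagonal matrix `N±` of Lemma 2.1 (diagonal `t`, off-diagonal
entries `r 0, …, r (n-1)`, corners `± r n`, palindromic `r j = r (n - j + 1)`) by `Q±`
yields a centrosymmetric matrix: `J (Q± N± Q±⁻¹) J = Q± N± Q±⁻¹`. -/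
theorem stmt_16 (n : ℕ) (hn : 2 ≤ n) (t : ℂ) (r : ℕ → ℂ) (ε : ℂ) (hε : ε = 1 ∨ ε = -1)
    (hpal : ∀ j, 1 ≤ j → 2 * j ≤ n → r j = r (n - j + 1))
    (N Q J : Matrix (Fin (n + 1)) (Fin (n + 1)) ℂ)
    (hN : N = tri (n + 1) (fun _ => t) (fun i => r i) (fun i => r i) +
      Matrix.of fun i j : Fin (n + 1) =>
        if (i = 0 ∧ j = Fin.last n) ∨ (i = Fin.last n ∧ j = 0) then ε * r n else 0)
    (hQ : Q = Matrix.of fun i j : Fin (n + 1) =>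
      if (i : ℕ) + 1 = (j : ℕ) then 1 else if i = Fin.last n ∧ j = 0 then ε else 0)
    (hJ : J = Matrix.of fun i j : Fin (n + 1) => if j = i.rev then 1 else 0) :
    Q.det = ε * (-1) ^ n ∧ IsUnit Q ∧ J * (Q * N * Q⁻¹) * J = Q * N * Q⁻¹ := by
  have hε2 : ε * ε = 1 := by rcases hε with h | h <;> rw [h] <;> ring
  have hεne : ε ≠ 0 := by rcases hε with h | h <;> rw [h] <;> norm_num
  set σ : Equiv.Perm (Fin (n + 1)) := finRotate (n + 1) with hσdef
  set d : Fin (n + 1) → ℂ := fun i => if i = Fin.last n then ε else 1 with hd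
  set P : Matrix (Fin (n + 1)) (Fin (n + 1)) ℂ := σ.toPEquiv.toMatrix with hP
  set P' : Matrix (Fin (n + 1)) (Fin (n + 1)) ℂ := (σ⁻¹).toPEquiv.toMatrix with hP'
  -- factorization of Q
  have hQfact : Q = Matrix.diagonal d * P := by
    rw [hQ]
    ext i j
    simp only [Matrix.of_apply]
    rw [Matrix.diagonal_mul, hP, PEquiv.toMatrix_apply, Equiv.toPEquiv_apply]
    by_cases hil : i = Fin.last n
    · have h1 : ¬ ((i : ℕ) + 1 = (j : ℕ)) := by
        have := j.isLt
        rw [hil, Fin.val_last]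
        omega
      rw [if_neg h1, hσdef]
      have h2 : finRotate (n + 1) i = 0 := by
        rw [finRotate_succ_apply, hil, Fin.last_add_one]
      rw [h2]
      have hdi : d i = ε := by rw [hd]; simp [hil]
      rw [hdi]
      by_cases hj0 : j = 0
      · rw [if_pos (⟨hil, hj0⟩ : i = Fin.last n ∧ j = 0), if_pos (by simp [hj0]), mul_one]
      · rw [if_neg (by tauto), if_neg (by simp [Option.mem_def]; exact fun h => hj0 h.symm), mul_zero]
    · have hd1 : d i = 1 := by rw [hd]; simp only [if_neg hil]
      have hσi : ((σ i : Fin (n + 1)) : ℕ) = (i : ℕ) + 1 := by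
        rw [hσdef, finRotate_succ_apply, Fin.val_add_one]
        simp [hil]
      rw [hd1, one_mul]
      have : ((i : ℕ) + 1 = (j : ℕ)) ↔ j ∈ Option.some (σ i) := by
        rw [Option.mem_def, Option.some_inj, Fin.ext_iff, hσi, eq_comm]
      by_cases hc : (i : ℕ) + 1 = (j : ℕ)
      · rw [if_pos hc, if_pos (this.mp hc)]
      · rw [if_neg hc, if_neg (fun h => hc (this.mpr h)), if_neg (by tauto)]
  have hPP' : P * P' = 1 := by
    rw [hP, hP', ← PEquiv.toMatrix_trans, ← Equiv.toPEquiv_trans]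
    have : σ.trans (σ⁻¹ : Equiv.Perm (Fin (n+1))) = Equiv.refl (Fin (n+1)) := by
      ext x; simp
    rw [this, Equiv.toPEquiv_refl, PEquiv.toMatrix_refl]
  have hP'P : P' * P = 1 := by
    rw [hP, hP', ← PEquiv.toMatrix_trans, ← Equiv.toPEquiv_trans]
    have : (σ⁻¹ : Equiv.Perm (Fin (n+1))).trans σ = Equiv.refl (Fin (n+1)) := by
      ext x; simp
    rw [this, Equiv.toPEquiv_refl, PEquiv.toMatrix_refl]
  have hDD : Matrix.diagonal d * Matrix.diagonal d = 1 := by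
    rw [Matrix.diagonal_mul_diagonal]
    have : (fun i => d i * d i) = fun _ => (1 : ℂ) := by
      funext i
      rw [hd]
      by_cases h : i = Fin.last n <;> simp [h, hε2]
    rw [this, Matrix.diagonal_one]
  set Qi : Matrix (Fin (n + 1)) (Fin (n + 1)) ℂ := P' * Matrix.diagonal d with hQi
  have hQQi : Q * Qi = 1 := by
    rw [hQfact, hQi]
    calc Matrix.diagonal d * P * (P' * Matrix.diagonal d)
        = Matrix.diagonal d * (P * P') * Matrix.diagonal d := by
          rw [Matrix.mul_assoc, Matrix.mul_assoc, Matrix.mul_assoc]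
      _ = 1 := by rw [hPP', Matrix.mul_one, hDD]
  have hQiQ : Qi * Q = 1 := by
    rw [hQfact, hQi]
    calc P' * Matrix.diagonal d * (Matrix.diagonal d * P)
        = P' * (Matrix.diagonal d * Matrix.diagonal d) * P := by
          rw [Matrix.mul_assoc, Matrix.mul_assoc, Matrix.mul_assoc]
      _ = 1 := by rw [hDD, Matrix.mul_one, hP'P]
  have hQinv : Q⁻¹ = Qi := Matrix.inv_eq_right_inv hQQi
  -- determinant
  have hdet : Q.det = ε * (-1) ^ n := by
    rw [hQfact, Matrix.det_mul, Matrix.det_diagonal]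
    have h1 : ∏ i, d i = ε := by
      rw [hd]
      rw [Finset.prod_ite_eq' Finset.univ (Fin.last n) (fun _ => ε)]
      simp
    have h2 : P.det = ((Equiv.Perm.sign σ : ℤ) : ℂ) := Matrix.det_permutation σ
    rw [h1, h2, hσdef, sign_finRotate]
    push_cast
    ring
  refine ⟨hdet, ?_, ?_⟩
  · rw [Matrix.isUnit_iff_isUnit_det, hdet, isUnit_iff_ne_zero]
    exact mul_ne_zero hεne (pow_ne_zero _ (by norm_num))
  -- centrosymmetry
  have hJfact : J = (Fin.revPerm : Equiv.Perm (Fin (n + 1))).toPEquiv.toMatrix := by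
    rw [hJ]
    ext i j
    simp [PEquiv.toMatrix_apply, Equiv.toPEquiv_apply, Option.mem_def, eq_comm]
  have hM : Q * N * Q⁻¹ = Matrix.of (fun i j => d i * N (σ i) (σ j) * d j) := by
    rw [hQinv, hQi, hQfact]
    calc Matrix.diagonal d * P * N * (P' * Matrix.diagonal d)
        = Matrix.diagonal d * ((P * N) * P') * Matrix.diagonal d := by
          simp only [Matrix.mul_assoc]
      _ = Matrix.of (fun i j => d i * N (σ i) (σ j) * d j) := by
          rw [hP, PEquiv.toMatrix_toPEquiv_mul, hP', PEquiv.mul_toMatrix_toPEquiv]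
          ext a b
          have hss : (σ⁻¹ : Equiv.Perm (Fin (n + 1))).symm b = σ b := by
            simp [Equiv.Perm.inv_def]
          rw [Matrix.mul_diagonal, Matrix.diagonal_mul, Matrix.of_apply,
            Matrix.submatrix_apply, Matrix.submatrix_apply, id_eq, hss, id_eq]
  rw [hM, hJfact, PEquiv.toMatrix_toPEquiv_mul, PEquiv.mul_toMatrix_toPEquiv,
    Fin.revPerm_symm]
  ext i j
  rw [Matrix.submatrix_apply, Matrix.submatrix_apply, Fin.revPerm_apply, Fin.revPerm_apply,
    Matrix.of_apply, Matrix.of_apply, id_eq]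
  -- entrywise computations
  have hNval : ∀ p q : Fin (n + 1), N p q =
      (if (p : ℕ) = (q : ℕ) then t else if (p : ℕ) + 1 = (q : ℕ) then r (p : ℕ)
        else if (q : ℕ) + 1 = (p : ℕ) then r (q : ℕ) else 0) +
      (if ((p : ℕ) = 0 ∧ (q : ℕ) = n) ∨ ((p : ℕ) = n ∧ (q : ℕ) = 0) then ε * r n else 0) := by
    intro p q
    rw [hN]
    simp only [Matrix.add_apply, tri, Matrix.of_apply, Fin.ext_iff, Fin.val_zero, Fin.val_last]
  have hdval : ∀ p : Fin (n + 1), d p = (if (p : ℕ) = n then ε else 1) := by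
    intro p
    rw [hd]
    simp only [Fin.ext_iff, Fin.val_last]
  have hσval : ∀ p : Fin (n + 1), ((σ p : Fin (n + 1)) : ℕ) =
      if (p : ℕ) = n then 0 else (p : ℕ) + 1 := by
    intro p
    have hiff : p = Fin.last n ↔ (p : ℕ) = n := by rw [Fin.ext_iff, Fin.val_last]
    rw [hσdef, finRotate_succ_apply, Fin.val_add_one]
    simp only [hiff]
  have hrevval : ∀ p : Fin (n + 1), ((p.rev : Fin (n + 1)) : ℕ) = n - (p : ℕ) := by
    intro p
    rw [Fin.val_rev]
    omega
  have key := keyN n hn t r ε hε2 hpal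
    (fun p q => (if p = q then t else if p + 1 = q then r p else if q + 1 = p then r q else 0) +
      (if (p = 0 ∧ q = n) ∨ (p = n ∧ q = 0) then ε * r n else 0)) (fun _ _ => rfl)
    (fun k => if k = n then ε else 1) (fun _ => rfl)
    (fun k => if n - k = n then 0 else (n - k) + 1)
    (fun k => if k = n then 0 else k + 1)
    (fun k hk => by
      show (if n - k = n then 0 else n - k + 1) = if k = 0 then 0 else n + 1 - k
      split_ifs <;> omega)
    (fun _ => rfl)
    (i : ℕ) (j : ℕ) (Fin.is_le i) (Fin.is_le j)
  simp only [id_eq, hNval, hdval, hσval, hrevval]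
  exact key
end
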